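/- Let n ≥ 2, τ, o ∈ ℝⁿ, d_c > 0 with ‖o - τ‖ > 2·d_c, ε > 1/d_c, k₁ > 0, α ∈ (0,1), and define B(x) = ‖x - τ‖² / (‖x - o‖ - d_c + 1/ε). Let r > 0 and let D ⊆ ℝⁿ be a compact set with τ ∈ D, D ⊆ {x : ‖x - o‖ > d_c}, and D disjoint from {x : ∃ θ ≥ 1, ‖x - (τ + θ·(o - τ))‖ < r}. Let x : [0,∞) → ℝⁿ be differentiable with x(t) ∈ D for all t ≥ 0 and x'(t) = -k₁·∇B(x(t))·‖∇B(x(t))‖^(α-1) whenever ∇B(x(t)) ≠ 0, and x'(t) = 0 whenever ∇B(x(t)) = 0. Then there exists a finite T ≥ 0 such that x(t) = τ for all t ≥ T; moreover ‖x(t) - o‖ > d_c for all t ≥ 0. -/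

import Mathlib

/-!
Along the flow, `V(t) = B(x(t))` satisfies `V' = -k₁ ‖∇B‖^(α+1)`. On the safe set the
denominator of `B` exceeds `1/ε`, so `B(p) ≤ ε ‖p - τ‖²`. The only zeros of `∇B` in the safe
region other than `τ` lie on the ray from `τ` through `o` beyond `o`, which `D` avoids; near `τ`
one has `‖∇B(p)‖ ≥ ‖p - τ‖ / (‖p - o‖ - d_c + 1/ε)` directly, and away from `τ` compactness gives
a positive lower bound, so `‖∇B(p)‖ ≥ c ‖p - τ‖` on `D`. Hence `V' ≤ -K V^β` with
`β = (α + 1)/2 < 1`, and then `V^(1-β)` decreases at a fixed positive rate until `V` vanishes.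
-/

open Set Real

theorem antitoneOn_of_hasDerivAt_nonpos {s : Set ℝ} (hs : Convex ℝ s) {f f' : ℝ → ℝ}
    (hf : ∀ t ∈ s, HasDerivAt f (f' t) t) (hf' : ∀ t ∈ s, f' t ≤ 0) : AntitoneOn f s :=
  antitoneOn_of_hasDerivWithinAt_nonpos hs (fun t ht => (hf t ht).continuousAt.continuousWithinAt)
    (fun t ht => (hf t (interior_subset ht)).hasDerivWithinAt) fun t ht => hf' t (interior_subset ht)

theorem eq_zero_of_hasDerivAt_le_neg_mul_rpow {V V' : ℝ → ℝ} {K β : ℝ} (hK : 0 < K) (hβ : β < 1)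
    (hV0 : ∀ t, 0 ≤ t → 0 ≤ V t) (hV : ∀ t, 0 ≤ t → HasDerivAt V (V' t) t)
    (hV' : ∀ t, 0 ≤ t → V' t ≤ -(K * V t ^ β)) :
    ∀ t, V 0 ^ (1 - β) / (K * (1 - β)) ≤ t → V t = 0 := by
  have hanti : AntitoneOn V (Ici 0) :=
    antitoneOn_of_hasDerivAt_nonpos (convex_Ici 0) hV fun t ht =>
      (hV' t ht).trans (neg_nonpos.2 (mul_nonneg hK.le (rpow_nonneg (hV0 t ht) β)))
  set T := V 0 ^ (1 - β) / (K * (1 - β))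
  have hKβ : 0 < K * (1 - β) := mul_pos hK (by linarith)
  have hT : 0 ≤ T := div_nonneg (rpow_nonneg (hV0 0 le_rfl) _) hKβ.le
  suffices hVT : V T = 0 from fun t ht =>
    le_antisymm (hVT ▸ hanti hT (hT.trans ht) ht) (hV0 t (hT.trans ht))
  by_contra hne
  have hpos : ∀ t ∈ Icc 0 T, 0 < V t := fun t ht =>
    ((hV0 T hT).lt_of_ne' hne).trans_le (hanti ht.1 hT ht.2)
  have hφ : AntitoneOn (fun t => V t ^ (1 - β) + K * (1 - β) * t) (Icc 0 T) := by
    refine antitoneOn_of_hasDerivAt_nonpos (convex_Icc 0 T) (fun t ht =>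
      ((hV t ht.1).rpow_const (Or.inl (hpos t ht).ne')).add
        ((hasDerivAt_id t).const_mul (K * (1 - β)))) fun t ht => ?_
    have hcancel : V t ^ β * V t ^ (1 - β - 1) = 1 := by
      rw [← rpow_add (hpos t ht)]; simp
    calc V' t * (1 - β) * V t ^ (1 - β - 1) + K * (1 - β) * 1
        ≤ -(K * V t ^ β) * (1 - β) * V t ^ (1 - β - 1) + K * (1 - β) * 1 := by
          gcongr
          exacts [rpow_nonneg (hpos t ht).le _, hV' t ht.1]
      _ = 0 := by
          linear_combination (-(K * (1 - β))) * hcancel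
  have hφT := hφ ⟨le_rfl, hT⟩ ⟨hT, le_rfl⟩ hT
  have hT_eq : K * (1 - β) * T = V 0 ^ (1 - β) := mul_div_cancel₀ _ hKβ.ne'
  have hVT_pos := rpow_pos_of_pos (hpos T ⟨hT, le_rfl⟩) (1 - β)
  simp only [mul_zero, add_zero] at hφT
  linarith

section GradientFlow

variable {F : Type*} [NormedAddCommGroup F] [InnerProductSpace ℝ F] [CompleteSpace F]

theorem hasDerivAt_comp_of_normalized_gradient_flow {f : F → ℝ} {x : ℝ → F} {t k α : ℝ}
    (hα : α + 1 ≠ 0) (hf : DifferentiableAt ℝ f (x t))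
    (hx : gradient f (x t) ≠ 0 →
      HasDerivAt x ((-k * ‖gradient f (x t)‖ ^ (α - 1)) • gradient f (x t)) t)
    (hx0 : gradient f (x t) = 0 → HasDerivAt x 0 t) :
    HasDerivAt (f ∘ x) (-(k * ‖gradient f (x t)‖ ^ (α + 1))) t := by
  have hchain {x' : F} (h : HasDerivAt x x' t) :=
    hf.hasGradientAt.hasFDerivAt.comp_hasDerivAt t h
  by_cases h0 : gradient f (x t) = 0
  · simpa [h0, zero_rpow hα] using hchain (hx0 h0)
  · refine (hchain (hx h0)).congr_deriv ?_
    have hpos : 0 < ‖gradient f (x t)‖ := norm_pos_iff.2 h0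
    rw [InnerProductSpace.toDual_apply_apply, real_inner_smul_right, real_inner_self_eq_norm_sq,
      ← rpow_natCast, mul_assoc, ← rpow_add hpos,
      show α - 1 + ((2 : ℕ) : ℝ) = α + 1 by push_cast; ring]
    ring

theorem exists_forall_ge_eq_zero_of_normalized_gradient_flow {f : F → ℝ} {D : Set F}
    {x : ℝ → F} {τ : F} {c ε k α : ℝ} (hc : 0 < c) (hε : 0 < ε) (hk : 0 < k)
    (hα0 : -1 < α) (hα1 : α < 1) (hfD : ∀ p ∈ D, DifferentiableAt ℝ f p)
    (hf0 : ∀ p ∈ D, 0 ≤ f p) (hfle : ∀ p ∈ D, f p ≤ ε * ‖p - τ‖ ^ 2)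
    (hgrad : ∀ p ∈ D, c * ‖p - τ‖ ≤ ‖gradient f p‖) (hxD : ∀ t, 0 ≤ t → x t ∈ D)
    (hx : ∀ t, 0 ≤ t → gradient f (x t) ≠ 0 →
      HasDerivAt x ((-k * ‖gradient f (x t)‖ ^ (α - 1)) • gradient f (x t)) t)
    (hx0 : ∀ t, 0 ≤ t → gradient f (x t) = 0 → HasDerivAt x 0 t) :
    ∃ T, 0 ≤ T ∧ ∀ t, T ≤ t → f (x t) = 0 := by
  set β := (α + 1) / 2 with hβ
  set K := k * c ^ (α + 1) / ε ^ β with hK_def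
  have hK : 0 < K := by positivity
  have hβ1 : β < 1 := by rw [hβ]; linarith
  refine ⟨_, ?_, eq_zero_of_hasDerivAt_le_neg_mul_rpow hK hβ1
    (fun t ht => hf0 _ (hxD t ht)) (fun t ht => hasDerivAt_comp_of_normalized_gradient_flow
      (by linarith) (hfD _ (hxD t ht)) (hx t ht) (hx0 t ht)) fun t ht => ?_⟩
  · exact div_nonneg (rpow_nonneg (hf0 _ (hxD 0 le_rfl)) _) (mul_pos hK (by linarith)).le
  have hp := hxD t ht
  have hdecay : K * f (x t) ^ β ≤ k * ‖gradient f (x t)‖ ^ (α + 1) :=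
    calc K * f (x t) ^ β ≤ K * (ε * ‖x t - τ‖ ^ 2) ^ β := by
          gcongr
          exacts [hf0 _ hp, by rw [hβ]; linarith, hfle _ hp]
      _ = k * (c * ‖x t - τ‖) ^ (α + 1) := by
          rw [hK_def, mul_rpow hε.le (by positivity), mul_rpow hc.le (norm_nonneg _),
            ← rpow_natCast, ← rpow_mul (norm_nonneg _),
            show ((2 : ℕ) : ℝ) * β = α + 1 by rw [hβ]; push_cast; ring]
          field_simp
      _ ≤ k * ‖gradient f (x t)‖ ^ (α + 1) := by
          gcongr
          exacts [by linarith, hgrad _ hp]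
  simpa using hdecay

end GradientFlow

section Barrier

variable {F : Type*} [NormedAddCommGroup F] {τ o p : F} {m : ℝ}

noncomputable def barrier (τ o : F) (m : ℝ) (y : F) : ℝ :=
  ‖y - τ‖ ^ 2 / (‖y - o‖ + m)

theorem barrier_le_mul_sq {ε : ℝ} (hε : 0 < ε) (hg : 1 / ε ≤ ‖p - o‖ + m) :
    barrier τ o m p ≤ ε * ‖p - τ‖ ^ 2 := by
  rw [barrier, div_le_iff₀ ((one_div_pos.2 hε).trans_le hg)]
  calc ‖p - τ‖ ^ 2 = ε * ‖p - τ‖ ^ 2 * (1 / ε) := by field_simp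
    _ ≤ _ := by gcongr

theorem eq_of_barrier_eq_zero (hg : 0 < ‖p - o‖ + m) (h : barrier τ o m p = 0) : p = τ := by
  rw [barrier, div_eq_zero_iff, or_iff_left hg.ne'] at h
  simpa [sub_eq_zero] using h

variable [NormedSpace ℝ F]

noncomputable def barrierGrad (τ o : F) (m : ℝ) (p : F) : F :=
  ((‖p - o‖ + m) ^ 2)⁻¹ •
    ((2 * (‖p - o‖ + m)) • (p - τ) - (‖p - τ‖ ^ 2 / ‖p - o‖) • (p - o))

theorem continuousAt_barrierGrad (hpo : p ≠ o) (hg : ‖p - o‖ + m ≠ 0) :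
    ContinuousAt (barrierGrad τ o m) p := by
  have hpo' : ‖p - o‖ ≠ 0 := norm_ne_zero_iff.2 (sub_ne_zero.2 hpo)
  unfold barrierGrad
  fun_prop (disch := positivity)

theorem div_le_norm_barrierGrad (hg : 0 < ‖p - o‖ + m) (hpτ : ‖p - τ‖ ≤ ‖p - o‖ + m) :
    ‖p - τ‖ / (‖p - o‖ + m) ≤ ‖barrierGrad τ o m p‖ := by
  set g := ‖p - o‖ + m
  have hsub : ‖(‖p - τ‖ ^ 2 / ‖p - o‖) • (p - o)‖ ≤ ‖p - τ‖ ^ 2 := by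
    rw [norm_smul, Real.norm_of_nonneg (by positivity)]
    rcases eq_or_ne ‖p - o‖ 0 with h0 | h0
    · simp [h0]
    · rw [div_mul_cancel₀ _ h0]
  have hmain : g * ‖p - τ‖ ≤ ‖(2 * g) • (p - τ) - (‖p - τ‖ ^ 2 / ‖p - o‖) • (p - o)‖ := by
    calc g * ‖p - τ‖ ≤ 2 * g * ‖p - τ‖ - ‖p - τ‖ ^ 2 := by nlinarith [norm_nonneg (p - τ)]
      _ ≤ ‖(2 * g) • (p - τ)‖ - ‖(‖p - τ‖ ^ 2 / ‖p - o‖) • (p - o)‖ := by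
        rw [norm_smul, Real.norm_of_nonneg (by positivity)]; linarith
      _ ≤ _ := norm_sub_norm_le _ _
  rw [barrierGrad, norm_smul, Real.norm_of_nonneg (by positivity)]
  calc ‖p - τ‖ / g = (g ^ 2)⁻¹ * (g * ‖p - τ‖) := by field_simp
    _ ≤ _ := by gcongr

theorem exists_one_le_eq_add_smul_of_barrierGrad_eq_zero (hpo : p ≠ o) (hpτ : p ≠ τ)
    (hg : 0 < ‖p - o‖ + m) (hoτ : 0 ≤ ‖o - τ‖ + m) (h : barrierGrad τ o m p = 0) :
    ∃ θ : ℝ, 1 ≤ θ ∧ p = τ + θ • (o - τ) := by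
  set g := ‖p - o‖ + m
  have ha : 0 < ‖p - τ‖ := norm_pos_iff.2 (sub_ne_zero.2 hpτ)
  have hb : 0 < ‖p - o‖ := norm_pos_iff.2 (sub_ne_zero.2 hpo)
  have hcrit : (2 * g) • (p - τ) = (‖p - τ‖ ^ 2 / ‖p - o‖) • (p - o) := by
    rw [barrierGrad, smul_eq_zero, or_iff_right (by positivity), sub_eq_zero] at h
    exact h
  have hnorm : ‖p - τ‖ = 2 * g := by
    have := congrArg norm hcrit
    rw [norm_smul, norm_smul, Real.norm_of_nonneg (by positivity),
      Real.norm_of_nonneg (by positivity), div_mul_cancel₀ _ hb.ne'] at this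
    nlinarith
  set μ := ‖p - o‖ / ‖p - τ‖
  have hparallel : p - o = μ • (p - τ) := by
    have := congrArg ((‖p - o‖ / ‖p - τ‖ ^ 2) • ·) hcrit
    simp only [smul_smul] at this
    rw [div_mul_div_cancel₀ (by positivity), div_self hb.ne', one_smul] at this
    rw [← this, ← hnorm]
    congr 1
    simp only [μ]
    field_simp
  have hoτ_eq : o - τ = (1 - μ) • (p - τ) := by
    rw [sub_smul, one_smul, ← hparallel]; abel
  rcases lt_or_ge μ 1 with hμ | hμ
  · refine ⟨(1 - μ)⁻¹, ?_, ?_⟩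
    · exact one_le_inv₀ (by linarith) |>.2 (by linarith [show 0 ≤ μ by positivity])
    · rw [hoτ_eq, smul_smul, inv_mul_cancel₀ (by linarith), one_smul]; abel
  · have : ‖o - τ‖ = ‖p - o‖ - ‖p - τ‖ := by
      rw [hoτ_eq, norm_smul, Real.norm_of_nonpos (by linarith)]
      simp only [μ]
      field_simp
      ring
    linarith

theorem exists_pos_mul_le_norm_barrierGrad {D : Set F} (hD : IsCompact D)
    (hpo : ∀ p ∈ D, p ≠ o) (hg : ∀ p ∈ D, 0 < ‖p - o‖ + m)
    (hcrit : ∀ p ∈ D, p ≠ τ → barrierGrad τ o m p ≠ 0) :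
    ∃ c > 0, ∀ p ∈ D, c * ‖p - τ‖ ≤ ‖barrierGrad τ o m p‖ := by
  obtain ⟨G, hG, hGD⟩ : ∃ G > 0, ∀ p ∈ D, ‖p - o‖ + m ≤ G := by
    obtain ⟨G, hG, hGD⟩ := (hD.image_of_continuousOn
      (f := fun p => ‖p - o‖ + m) (by fun_prop)).isBounded.exists_pos_norm_le
    exact ⟨G, hG, fun p hp => (Real.le_norm_self _).trans (hGD _ ⟨p, hp, rfl⟩)⟩
  obtain ⟨R, hR, hRD⟩ : ∃ R > 0, ∀ p ∈ D, ‖p - τ‖ ≤ R := by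
    obtain ⟨R, hR, hRD⟩ := (hD.image_of_continuousOn
      (f := fun p => p - τ) (by fun_prop)).isBounded.exists_pos_norm_le
    exact ⟨R, hR, fun p hp => hRD _ ⟨p, hp, rfl⟩⟩
  have hfar_compact : IsCompact {p ∈ D | ‖p - o‖ + m ≤ ‖p - τ‖} :=
    hD.inter_right <| isClosed_le (f := fun p => ‖p - o‖ + m) (g := fun p => ‖p - τ‖)
      (by fun_prop) (by fun_prop)
  obtain ⟨δ, hδ, hδfar⟩ := hfar_compact.exists_forall_le' (a := 0)
    (fun p hp => (continuousAt_barrierGrad (hpo p hp.1) (hg p hp.1).ne').norm.continuousWithinAt)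
    (fun p hp => norm_pos_iff.2 <| hcrit p hp.1 fun hpτ =>
      (hg p hp.1).not_ge (hp.2.trans_eq (by rw [hpτ, sub_self, norm_zero])))
  refine ⟨min G⁻¹ (δ / R), by positivity, fun p hp => ?_⟩
  rcases le_or_gt ‖p - τ‖ (‖p - o‖ + m) with hnear | hfar
  · calc min G⁻¹ (δ / R) * ‖p - τ‖ ≤ ‖p - τ‖ / G := by
          rw [div_eq_inv_mul ‖p - τ‖ G]; gcongr; exact min_le_left _ _
      _ ≤ ‖p - τ‖ / (‖p - o‖ + m) :=
          div_le_div_of_nonneg_left (norm_nonneg _) (hg p hp) (hGD p hp)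
      _ ≤ _ := div_le_norm_barrierGrad (hg p hp) hnear
  · calc min G⁻¹ (δ / R) * ‖p - τ‖ ≤ δ / R * R := by
          gcongr; exacts [min_le_right _ _, hRD p hp]
      _ = δ := div_mul_cancel₀ _ hR.ne'
      _ ≤ _ := hδfar p ⟨hp, hfar.le⟩

end Barrier

section BarrierGradient

variable {F : Type*} [NormedAddCommGroup F] [InnerProductSpace ℝ F] {τ o p : F} {m : ℝ}

theorem hasFDerivAt_norm_sub (h : p ≠ o) :
    HasFDerivAt (fun y => ‖y - o‖) (‖p - o‖⁻¹ • innerSL ℝ (p - o)) p := by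
  have hpo : ‖p - o‖ ≠ 0 := norm_ne_zero_iff.2 (sub_ne_zero.2 h)
  have := ((hasFDerivAt_id p).sub_const o).norm_sq.sqrt (by positivity)
  simp only [id, Real.sqrt_sq (norm_nonneg _)] at this
  refine this.congr_fderiv ?_
  ext v
  simp only [one_div, mul_inv_rev, map_sub, ContinuousLinearMap.comp_id,
    smul_apply, sub_apply, coe_innerSL_apply,
    nsmul_eq_mul, Nat.cast_ofNat, smul_eq_mul]
  field_simp

theorem hasGradientAt_barrier [CompleteSpace F] (hpo : p ≠ o) (hg : ‖p - o‖ + m ≠ 0) :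
    HasGradientAt (barrier τ o m) (barrierGrad τ o m p) p := by
  have hnum := ((hasFDerivAt_id p).sub_const τ).norm_sq
  have hden := ((hasDerivAt_inv hg).comp_hasFDerivAt p ((hasFDerivAt_norm_sub hpo).add_const m))
  have hpo' : ‖p - o‖ ≠ 0 := norm_ne_zero_iff.2 (sub_ne_zero.2 hpo)
  rw [hasGradientAt_iff_hasFDerivAt]
  refine (hnum.mul hden).congr_fderiv ?_ |>.congr_of_eventuallyEq ?_
  · ext v
    simp only [id_eq, map_sub, neg_smul, smul_neg, Function.comp_apply,
      ContinuousLinearMap.comp_id, add_apply, neg_apply,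
      smul_apply, sub_apply, coe_innerSL_apply,
      smul_eq_mul, nsmul_eq_mul, Nat.cast_ofNat, barrierGrad, map_smul,
      InnerProductSpace.toDual_apply_apply]
    field_simp
    ring
  · exact Filter.Eventually.of_forall fun y => by simp [barrier, div_eq_mul_inv]

end BarrierGradient

theorem stmt_12_general (n : ℕ) (τ o : EuclideanSpace ℝ (Fin n))
    (dc ε k₁ α : ℝ) (hdc : 0 < dc) (hsep : 2 * dc < ‖o - τ‖) (hε : 1 / dc < ε)
    (hk₁ : 0 < k₁) (hα0 : 0 < α) (hα1 : α < 1)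
    (B : EuclideanSpace ℝ (Fin n) → ℝ)
    (hB : ∀ y, B y = ‖y - τ‖ ^ 2 / (‖y - o‖ - dc + 1 / ε))
    (r : ℝ) (hr : 0 < r)
    (D : Set (EuclideanSpace ℝ (Fin n))) (hDc : IsCompact D)
    (hDsafe : D ⊆ {x | dc < ‖x - o‖})
    (hDray : Disjoint D {x | ∃ θ : ℝ, 1 ≤ θ ∧ ‖x - (τ + θ • (o - τ))‖ < r})
    (x : ℝ → EuclideanSpace ℝ (Fin n)) (hxD : ∀ t, 0 ≤ t → x t ∈ D)
    (hx : ∀ t, 0 ≤ t → gradient B (x t) ≠ 0 →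
      HasDerivAt x ((-k₁ * ‖gradient B (x t)‖ ^ (α - 1)) • gradient B (x t)) t)
    (hx0 : ∀ t, 0 ≤ t → gradient B (x t) = 0 → HasDerivAt x 0 t) :
    (∃ T : ℝ, 0 ≤ T ∧ ∀ t, T ≤ t → x t = τ) ∧ ∀ t, 0 ≤ t → dc < ‖x t - o‖ := by
  have hε0 : 0 < ε := (one_div_pos.2 hdc).trans hε
  have hε_inv : 0 < 1 / ε := one_div_pos.2 hε0
  set m := 1 / ε - dc with hm
  have hBm : B = barrier τ o m := funext fun y => by rw [hB, barrier, hm]; ring_nf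
  have hgD : ∀ p ∈ D, 1 / ε < ‖p - o‖ + m := fun p hp => by
    have : dc < ‖p - o‖ := hDsafe hp
    linarith
  have hgD_pos : ∀ p ∈ D, 0 < ‖p - o‖ + m := fun p hp => hε_inv.trans (hgD p hp)
  have hpo : ∀ p ∈ D, p ≠ o := fun p hp h => by
    have : dc < ‖p - o‖ := hDsafe hp
    simp only [h, sub_self, norm_zero] at this
    linarith
  have hgrad : ∀ p ∈ D, HasGradientAt B (barrierGrad τ o m p) p := fun p hp =>
    hBm ▸ hasGradientAt_barrier (hpo p hp) (hgD_pos p hp).ne'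
  obtain ⟨c, hc, hcD⟩ := exists_pos_mul_le_norm_barrierGrad hDc hpo hgD_pos
    fun p hp hpτ h0 => by
      obtain ⟨θ, hθ, rfl⟩ := exists_one_le_eq_add_smul_of_barrierGrad_eq_zero (hpo _ hp) hpτ
        (hgD_pos _ hp) (by linarith) h0
      exact hDray.ne_of_mem hp ⟨θ, hθ, by simpa using hr⟩ rfl
  obtain ⟨T, hT, hBT⟩ := exists_forall_ge_eq_zero_of_normalized_gradient_flow hc hε0 hk₁
    (by linarith) hα1 (fun p hp => (hgrad p hp).differentiableAt)
    (fun p hp => hBm ▸ div_nonneg (sq_nonneg _) (hgD_pos p hp).le)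
    (fun p hp => hBm ▸ barrier_le_mul_sq hε0 (hgD p hp).le)
    (fun p hp => (hgrad p hp).gradient ▸ hcD p hp) hxD hx hx0
  exact ⟨⟨T, hT, fun t ht => eq_of_barrier_eq_zero (hgD_pos _ (hxD t (hT.trans ht)))
    (hBm ▸ hBT t ht)⟩, fun t ht => hDsafe (hxD t ht)⟩

/-- Finite-time convergence and safety for the barrier-function controller: any
solution of `ẋ = -k₁·∇B(x)·‖∇B(x)‖^(α-1)` remaining in a compact set `D`
(containing `τ`, inside the safe region, avoiding a neighborhood of the ray from
`τ` through `o` beyond `o`) reaches `τ` in finite time and stays safe. -/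
theorem stmt_12 (n : ℕ) (hn : 2 ≤ n) (τ o : EuclideanSpace ℝ (Fin n))
    (dc ε k₁ α : ℝ) (hdc : 0 < dc) (hsep : 2 * dc < ‖o - τ‖) (hε : 1 / dc < ε)
    (hk₁ : 0 < k₁) (hα0 : 0 < α) (hα1 : α < 1)
    (B : EuclideanSpace ℝ (Fin n) → ℝ)
    (hB : ∀ y, B y = ‖y - τ‖ ^ 2 / (‖y - o‖ - dc + 1 / ε))
    (r : ℝ) (hr : 0 < r)
    (D : Set (EuclideanSpace ℝ (Fin n))) (hDc : IsCompact D) (hτD : τ ∈ D)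
    (hDsafe : D ⊆ {x | dc < ‖x - o‖})
    (hDray : Disjoint D {x | ∃ θ : ℝ, 1 ≤ θ ∧ ‖x - (τ + θ • (o - τ))‖ < r})
    (x : ℝ → EuclideanSpace ℝ (Fin n)) (hxD : ∀ t, 0 ≤ t → x t ∈ D)
    (hx : ∀ t, 0 ≤ t → gradient B (x t) ≠ 0 →
      HasDerivAt x ((-k₁ * ‖gradient B (x t)‖ ^ (α - 1)) • gradient B (x t)) t)
    (hx0 : ∀ t, 0 ≤ t → gradient B (x t) = 0 → HasDerivAt x 0 t) :
    (∃ T : ℝ, 0 ≤ T ∧ ∀ t, T ≤ t → x t = τ) ∧ ∀ t, 0 ≤ t → dc < ‖x t - o‖ :=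
  stmt_12_general n τ o dc ε k₁ α hdc hsep hε hk₁ hα0 hα1 B hB r hr D hDc hDsafe hDray x hxD hx hx0
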